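/- Let G be an inverse semigroup and A a G-algebra. The set G_E is closed under the multiplication and the involution of 𝔽(G,A), and it is an inverse semigroup: every k ∈ G_E satisfies k·k*·k = k and k*·k·k* = k*, and any two idempotent elements of G_E commute (so that each k ∈ G_E has k* as its unique generalized inverse). -/

import Mathlib

/-! Common setup: inverse semigroups, G-algebras, and the universal *-algebra 𝔽(G,A). -/

noncomputable section

/-- An inverse semigroup: a semigroup in which every element `g` has a unique
generalized inverse, denoted `star g`. -/
class InverseSemigroup (G : Type*) extends Semigroup G, Star G where
  mul_star_mul_self : ∀ g : G, g * star g * g = g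
  star_mul_self_mul_star : ∀ g : G, star g * g * star g = star g
  star_unique : ∀ g h : G, g * h * g = g → h * g * h = h → h = star g

namespace Green

/-! ### The free complex *-algebra on a set of generators

The free complex *-algebra on a set `Y` is realized as the monoid algebra of the free
monoid on the letters `Y × Bool` (a generator together with a formal star flag); its star
operation conjugates coefficients, reverses words and flips the star flags. -/

/-- The free complex *-algebra on the set `Y`. -/
abbrev FreeStar (Y : Type*) := MonoidAlgebra ℂ (FreeMonoid (Y × Bool))

namespace FreeStar

variable {Y : Type*}

/-- Star of a word: reverse it and flip all star flags. -/
def wordStar (w : FreeMonoid (Y × Bool)) : FreeMonoid (Y × Bool) :=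
  FreeMonoid.ofList (((FreeMonoid.toList w).map fun x => (x.1, !x.2)).reverse)

lemma wordStar_mul (v w : FreeMonoid (Y × Bool)) :
    wordStar (v * w) = wordStar w * wordStar v := by
  simp [wordStar, FreeMonoid.toList_mul]

lemma wordStar_wordStar (w : FreeMonoid (Y × Bool)) : wordStar (wordStar w) = w := by
  simp [wordStar, List.map_reverse, List.map_map, Function.comp_def]

/-- The star operation on the free complex *-algebra, as an additive map. -/
def starAux : FreeStar Y →+ FreeStar Y :=
  MonoidAlgebra.coeffAddEquiv.symm.toAddMonoidHom.comp ((Finsupp.mapDomain.addMonoidHom wordStar).comp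
    ((Finsupp.mapRange.addMonoidHom (starRingEnd ℂ).toAddMonoidHom).comp
      MonoidAlgebra.coeffAddEquiv.toAddMonoidHom))

lemma starAux_apply (f : FreeStar Y) :
    starAux f = MonoidAlgebra.ofCoeff
      (Finsupp.mapDomain wordStar (Finsupp.mapRange (starRingEnd ℂ) (map_zero _) f.coeff)) :=
  rfl

lemma starAux_single (w : FreeMonoid (Y × Bool)) (c : ℂ) :
    starAux (MonoidAlgebra.single w c) = MonoidAlgebra.single (wordStar w) (starRingEnd ℂ c) := by
  rw [starAux_apply]
  rw [MonoidAlgebra.coeff_single, Finsupp.mapRange_single, Finsupp.mapDomain_single]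
  rfl

instance instStarRing : StarRing (FreeStar Y) where
  star := starAux
  star_involutive := by
    intro f
    induction f using MonoidAlgebra.induction_linear with
    | zero => simp
    | add f g hf hg => simp_all [map_add]
    | single w c => simp [starAux_single, wordStar_wordStar, starRingEnd_self_apply]
  star_mul := by
    intro f g
    show starAux (f * g) = starAux g * starAux f
    induction f using MonoidAlgebra.induction_linear with
    | zero => simp
    | add f f' hf hf' => simp [mul_add, add_mul, map_add, hf, hf']
    | single w c =>
      induction g using MonoidAlgebra.induction_linear with
      | zero => simp
      | add g g' hg hg' => simp [mul_add, add_mul, map_add, hg, hg']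
      | single v d =>
        simp only [MonoidAlgebra.single_mul_single, starAux_single, wordStar_mul, map_mul]
        rw [mul_comm]
  star_add := map_add _

end FreeStar

section GAlgebra

variable {G : Type*} [InverseSemigroup G]
variable {A : Type*} [NonUnitalNormedRing A] [StarRing A] [CStarRing A] [NormedSpace ℂ A]
  [IsScalarTower ℂ A A] [SMulCommClass ℂ A A] [StarModule ℂ A] [CompleteSpace A]

/-- `α` is an action of the inverse semigroup `G` on the C*-algebra `A` making it a
`G`-algebra: a semigroup homomorphism `G → End(A)` into the *-endomorphisms of `A` such
that `g g*(a)·b = a·g g*(b)` for all `a b : A` and `g : G`. -/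
structure IsGAlgebra (α : G → A →⋆ₙₐ[ℂ] A) : Prop where
  map_mul : ∀ g h : G, α (g * h) = (α g).comp (α h)
  central : ∀ (g : G) (a b : A), α (g * star g) a * b = a * α (g * star g) b

variable (α : G → A →⋆ₙₐ[ℂ] A)

/-- The generator of the free *-algebra corresponding to `a ∈ A`. -/
def genA (a : A) : FreeStar (A ⊕ G) := MonoidAlgebra.single (FreeMonoid.of (Sum.inl a, false)) 1

/-- The generator of the free *-algebra corresponding to `g ∈ G`. -/
def genG (g : G) : FreeStar (A ⊕ G) := MonoidAlgebra.single (FreeMonoid.of (Sum.inr g, false)) 1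

/-- The defining relations of `𝔽(G,A)`: the *-algebra relations of `A` are respected, the
multiplication and involution of `G` are respected, and `g(a)·g g* = g·a·g*`,
`[g g*, a] = 0` hold; the relation is moreover closed under `star`, so that the ideal
generated by it is a two-sided *-ideal. -/
inductive Rel : FreeStar (A ⊕ G) → FreeStar (A ⊕ G) → Prop
  | add_A (a b : A) : Rel (genA (G := G) (a + b)) (genA a + genA b)
  | smul_A (c : ℂ) (a : A) : Rel (genA (G := G) (c • a)) (c • genA a)
  | mul_A (a b : A) : Rel (genA (G := G) (a * b)) (genA a * genA b)
  | star_A (a : A) : Rel (genA (G := G) (star a)) (star (genA a))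
  | mul_G (g h : G) : Rel (genG (A := A) (g * h)) (genG g * genG h)
  | star_G (g : G) : Rel (genG (A := A) (star g)) (star (genG g))
  | act (g : G) (a : A) :
      Rel (genA (α g a) * genG g * genG (star g)) (genG g * genA a * genG (star g))
  | comm (g : G) (a : A) :
      Rel (genG g * genG (star g) * genA a) (genA a * genG g * genG (star g))
  | star_cl {x y} : Rel x y → Rel (star x) (star y)

/-- The universal *-algebra `𝔽(G,A)`: the quotient of the free complex *-algebra on the
set `A ⊔ G` by the two-sided *-ideal generated by the defining relations. -/
abbrev F := RingQuot (Rel α)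

instance : StarRing (F α) := RingQuot.starRing _ (fun _ _ h => Rel.star_cl h)

/-- The canonical copy of `a ∈ A` inside `𝔽(G,A)`. -/
def ιA (a : A) : F α := RingQuot.mkAlgHom ℂ (Rel α) (genA a)

/-- The canonical copy of `g ∈ G` inside `𝔽(G,A)`. -/
def ιG (g : G) : F α := RingQuot.mkAlgHom ℂ (Rel α) (genG g)

/-- The element `e₀(1-e₁)⋯(1-eₙ)` of `𝔽(G,A)` (product expanded multiplicatively),
given `e₀` and the list `[e₁, …, eₙ]`. -/
def elemP (e₀ : G) (l : List G) : F α :=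
  l.foldl (fun p e => p - p * ιG α e) (ιG α e₀)

/-- The element `g·e₀(1-e₁)⋯(1-eₙ)` of `𝔽(G,A)`. -/
def elemGE (g e₀ : G) (l : List G) : F α := ιG α g * elemP α e₀ l

/-- The set `E(G)` of projections `e₀(1-e₁)⋯(1-eₙ)` in `𝔽(G,A)`, with `e₀, …, eₙ`
idempotents of `G`. -/
def EG : Set (F α) :=
  {x | ∃ (e₀ : G) (l : List G), e₀ * e₀ = e₀ ∧ (∀ e ∈ l, e * e = e) ∧ x = elemP α e₀ l}

/-- The inverse semigroup `G_E = {g·p | g ∈ G, p ∈ E(G)}` inside `𝔽(G,A)`. -/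
def GE : Set (F α) :=
  {x | ∃ (g e₀ : G) (l : List G),
    e₀ * e₀ = e₀ ∧ (∀ e ∈ l, e * e = e) ∧ x = elemGE α g e₀ l}

/-- The extension of the `G`-action along a list: `(id - α e₁)∘⋯∘(id - α eₙ)`. -/
def actL : List G → A → A
  | [] => id
  | e :: l => fun a => actL l a - α e (actL l a)

/-- The extension of the `G`-action to `E(G)`:
`α_{e₀(1-e₁)⋯(1-eₙ)} = α_{e₀}∘(id - α_{e₁})∘⋯∘(id - α_{eₙ})`. -/
def actP (e₀ : G) (l : List G) : A → A := fun a => α e₀ (actL α l a)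

/-- The extension of the `G`-action to `G_E`: `α_{g·p} = α_g ∘ α_p`. -/
def actGE (g e₀ : G) (l : List G) : A → A := fun a => α g (actP α e₀ l a)

/-- The action of `k* = (g·e₀(1-e₁)⋯(1-eₙ))* = g*·(g e₀ g*)(1 - g e₁ g*)⋯(1 - g eₙ g*)`,
for `k = g·e₀(1-e₁)⋯(1-eₙ) ∈ G_E`. -/
def actStar (g e₀ : G) (l : List G) : A → A :=
  fun a => α (star g) (actP α (g * e₀ * star g) (l.map fun e => g * e * star g) a)

/-- The subalgebra `A_{k k*} = α_{k k*}(A) = (α_k ∘ α_{k*})(A)`,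
for `k = g·e₀(1-e₁)⋯(1-eₙ) ∈ G_E`. -/
def carrier (g e₀ : G) (l : List G) : Set A :=
  Set.range fun a => actGE α g e₀ l (actStar α g e₀ l a)

/-- `S` is a sub-inverse semigroup of `G`: a subset closed under multiplication and
involution. -/
structure IsSubInvSemigroup (S : Set G) : Prop where
  mul_mem : ∀ {a b : G}, a ∈ S → b ∈ S → a * b ∈ S
  star_mem : ∀ {a : G}, a ∈ S → star a ∈ S

variable (S : Set G)

/-- The set `E(H')` of projections `e₀(1-e₁)⋯(1-eₙ)` with `e₀, …, eₙ` idempotents of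
`H' = S`. -/
def EH : Set (F α) :=
  {x | ∃ (e₀ : G) (l : List G), (e₀ ∈ S ∧ e₀ * e₀ = e₀) ∧ (∀ e ∈ l, e ∈ S ∧ e * e = e) ∧
    x = elemP α e₀ l}

/-- `H⁽⁰⁾`: the set of nonzero minimal projections of `E(H')`
(where `q ≤ p` means `q p = q`). -/
def H0 : Set (F α) :=
  {p | p ∈ EH α S ∧ p ≠ 0 ∧ ∀ q ∈ EH α S, q ≠ 0 → q * p = q → q = p}

/-- The groupoid `H = {t·e | t ∈ H', e ∈ H⁽⁰⁾} \ {0}` associated to `H'`. -/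
def Hgpd : Set (F α) :=
  {x | x ≠ 0 ∧ ∃ t ∈ S, ∃ e ∈ H0 α S, x = ιG α t * e}

/-- `G_H = {g·e | g ∈ G, e ∈ H⁽⁰⁾, g* g ≥ e} \ {0}`. -/
def GH : Set (F α) :=
  {x | x ≠ 0 ∧ ∃ (g : G), ∃ e ∈ H0 α S, x = ιG α g * e ∧ e * ιG α (star g * g) = e}

/-- The relation `≡` on `G_H`: `g ≡ h` iff `g t = h` for some `t ∈ H`. -/
def equivH (x y : F α) : Prop := ∃ t ∈ Hgpd α S, x * t = y

end GAlgebra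

/-- For an assertion `P`, the scalar `[P]` which is `1` if `P` is true and `0` if `P`
is false. -/
def ind (P : Prop) : ℂ := @ite _ P (Classical.propDecidable P) 1 0

end Green


/-! Idempotents of an inverse semigroup commute, so their images in `𝔽` are commuting
self-adjoint idempotents; hence `E(G)` is a commutative family of projections, closed under
products, with `p · g = g · p'` for some `p' ∈ E(G)` (conjugating each `eᵢ` to `g* eᵢ g`).
Writing `k = g · p`, this gives the closure of `G_E`, `k k* k = k` and `k k* ∈ E(G)`.
An idempotent `p ∈ G_E` satisfies `p = (p p*)(p* p) = (p* p)(p p*) = p*`, so `p = p p* ∈ E(G)`;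
thus idempotents of `G_E` commute, and a regular semigroup with commuting idempotents has
unique generalized inverses. -/

theorem eq_of_mul_mul_eq_of_commute {M : Type*} [Semigroup M] {k m n : M}
    (hkm : k * m * k = k) (hmk : m * k * m = m) (hkn : k * n * k = k) (hnk : n * k * n = n)
    (hcomm₁ : Commute (m * k) (n * k)) (hcomm₂ : Commute (k * m) (k * n)) : m = n := by
  have hm : m = n * k * m :=
    calc m = m * (k * n * k) * m := by rw [hkn, hmk]
      _ = n * k * (m * k) * m := by rw [← hcomm₁.eq]; simp only [mul_assoc]
      _ = n * k * m := by rw [mul_assoc _ (m * k), hmk]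
  have hn : n = n * k * m :=
    calc n = n * (k * m * k) * n := by rw [hkm, hnk]
      _ = n * (k * n * (k * m)) := by rw [← hcomm₂.eq]; simp only [mul_assoc]
      _ = n * k * m := by simp only [← mul_assoc]; rw [hnk]
  exact hm.trans hn.symm

theorem isIdempotentElem_mul_of_mul_mul_eq {M : Type*} [Semigroup M] {k m : M}
    (h : k * m * k = k) : IsIdempotentElem (m * k) :=
  calc m * k * (m * k) = m * (k * m * k) := by simp only [mul_assoc]
    _ = m * k := by rw [h]

theorem isSelfAdjoint_of_isIdempotentElem_of_commute {M : Type*} [Semigroup M] [StarMul M]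
    {p : M} (hp : IsIdempotentElem p) (hreg : p * star p * p = p)
    (hcomm : Commute (p * star p) (star p * p)) : IsSelfAdjoint p := by
  have hp' : star p * star p = star p := by rw [← star_mul, hp.eq]
  have hreg' : star p * p * star p = star p := by
    simpa only [star_mul, star_star, mul_assoc] using congrArg star hreg
  calc star p = star p * (p * p) * star p := by rw [hp.eq, hreg']
    _ = p * star p * (star p * p) := by rw [hcomm.eq]; simp only [mul_assoc]
    _ = p := by rw [← mul_assoc, mul_assoc p, hp', hreg]

namespace InverseSemigroup

variable {G : Type*} [InverseSemigroup G] {e f : G}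

theorem star_star (g : G) : star (star g) = g :=
  (star_unique _ _ (star_mul_self_mul_star g) (mul_star_mul_self g)).symm

theorem star_eq_of_isIdempotentElem (he : IsIdempotentElem e) : star e = e :=
  (star_unique e e (by rw [he.eq, he.eq]) (by rw [he.eq, he.eq])).symm

theorem isIdempotentElem_mul_star (g : G) : IsIdempotentElem (g * star g) := by
  rw [IsIdempotentElem, ← mul_assoc, mul_star_mul_self]

theorem isIdempotentElem_star_mul (g : G) : IsIdempotentElem (star g * g) := by
  rw [IsIdempotentElem, ← mul_assoc, star_mul_self_mul_star]

theorem mul_mul_of_isIdempotentElem (he : IsIdempotentElem e) (t : G) : e * (e * t) = e * t := by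
  rw [← mul_assoc, he.eq]

/-- With `x = (e f)*`, the element `f x e` is another inverse of `e f`, hence equal to `x`;
this forces `x` to be idempotent, so `e f = x* = x`. -/
theorem isIdempotentElem_mul (he : IsIdempotentElem e) (hf : IsIdempotentElem f) :
    IsIdempotentElem (e * f) := by
  set x := star (e * f)
  have hx₁ : e * f * x * (e * f) = e * f := mul_star_mul_self _
  have hx₂ (t : G) : x * (e * (f * (x * t))) = x * t := by
    simpa only [mul_assoc] using congrArg (· * t) (star_mul_self_mul_star (e * f))
  have hfxe : f * x * e = x := star_unique _ _
    (by simpa only [mul_assoc, mul_mul_of_isIdempotentElem he, mul_mul_of_isIdempotentElem hf]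
      using hx₁)
    (by simp only [mul_assoc, mul_mul_of_isIdempotentElem he, mul_mul_of_isIdempotentElem hf,
      hx₂])
  have hx : IsIdempotentElem x := by
    rw [IsIdempotentElem]
    conv_lhs => rw [← hfxe]
    simpa only [mul_assoc, hx₂] using hfxe
  rwa [← star_star (e * f), star_eq_of_isIdempotentElem hx]

theorem commute_of_isIdempotentElem (he : IsIdempotentElem e) (hf : IsIdempotentElem f) :
    Commute e f := by
  have hef := isIdempotentElem_mul he hf
  have hfe := isIdempotentElem_mul hf he
  have h₁ : e * f * (f * e) * (e * f) = e * f := by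
    simpa only [mul_assoc, mul_mul_of_isIdempotentElem he, mul_mul_of_isIdempotentElem hf]
      using hef.eq
  have h₂ : f * e * (e * f) * (f * e) = f * e := by
    simpa only [mul_assoc, mul_mul_of_isIdempotentElem he, mul_mul_of_isIdempotentElem hf]
      using hfe.eq
  rw [Commute, SemiconjBy, star_unique _ _ h₁ h₂, star_eq_of_isIdempotentElem hef]

theorem mul_eq_mul_star_mul_mul (h : G) (he : IsIdempotentElem e) :
    e * h = h * (star h * e * h) := by
  calc e * h = e * (h * star h) * h := by rw [mul_assoc e, mul_star_mul_self]
    _ = h * (star h * e * h) := by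
      rw [(commute_of_isIdempotentElem he (isIdempotentElem_mul_star h)).eq]
      simp only [mul_assoc]

theorem isIdempotentElem_star_mul_mul (h : G) (he : IsIdempotentElem e) :
    IsIdempotentElem (star h * e * h) := by
  calc star h * e * h * (star h * e * h) = star h * (e * (h * (star h * e * h))) := by
        simp only [mul_assoc]
    _ = star h * e * h := by
      rw [← mul_eq_mul_star_mul_mul h he, mul_mul_of_isIdempotentElem he, mul_assoc]

end InverseSemigroup

namespace Green

section Projections

variable {G : Type*} [InverseSemigroup G]
variable {A : Type*} [NonUnitalNormedRing A] [StarRing A] [NormedSpace ℂ A]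
variable {α : G → A →⋆ₙₐ[ℂ] A} {e f : G} {l : List G}

theorem star_mkAlgHom (x : FreeStar (A ⊕ G)) :
    star (RingQuot.mkAlgHom ℂ (Rel α) x) = RingQuot.mkAlgHom ℂ (Rel α) (star x) := by
  simp only [RingQuot.mkAlgHom_def, RingQuot.mkRingHom_def, AlgHom.coe_mk, RingHom.coe_mk,
    MonoidHom.coe_mk, OneHom.coe_mk]
  rfl

theorem ιG_mul (g h : G) : ιG α (g * h) = ιG α g * ιG α h := by
  rw [ιG, ιG, ιG, ← map_mul]
  exact RingQuot.mkAlgHom_rel ℂ (Rel.mul_G g h)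

theorem ιG_star (g : G) : ιG α (star g) = star (ιG α g) := by
  rw [ιG, ιG, star_mkAlgHom]
  exact RingQuot.mkAlgHom_rel ℂ (Rel.star_G g)

theorem commute_ιG (he : IsIdempotentElem e) (hf : IsIdempotentElem f) :
    Commute (ιG α e) (ιG α f) := by
  rw [Commute, SemiconjBy, ← ιG_mul, ← ιG_mul,
    (InverseSemigroup.commute_of_isIdempotentElem he hf).eq]

theorem isIdempotentElem_ιG (he : IsIdempotentElem e) : IsIdempotentElem (ιG α e) := by
  rw [IsIdempotentElem, ← ιG_mul, he.eq]

theorem isSelfAdjoint_ιG (he : IsIdempotentElem e) : IsSelfAdjoint (ιG α e) := by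
  rw [IsSelfAdjoint, ← ιG_star, InverseSemigroup.star_eq_of_isIdempotentElem he]

theorem ιG_mul_ιG_eq (h : G) (he : IsIdempotentElem e) :
    ιG α e * ιG α h = ιG α h * ιG α (star h * e * h) := by
  rw [← ιG_mul, ← ιG_mul, InverseSemigroup.mul_eq_mul_star_mul_mul h he]

variable (α) in
def prodOneSub (l : List G) : F α := (l.map fun e => 1 - ιG α e).prod

theorem prodOneSub_cons : prodOneSub α (e :: l) = (1 - ιG α e) * prodOneSub α l :=
  List.prod_cons

theorem elemP_eq (e₀ : G) (l : List G) : elemP α e₀ l = ιG α e₀ * prodOneSub α l := by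
  suffices h : ∀ x : F α, l.foldl (fun p e => p - p * ιG α e) x = x * prodOneSub α l from h _
  induction l with
  | nil => simp [prodOneSub]
  | cons e l ih => intro x; rw [List.foldl_cons, ih, prodOneSub_cons, ← mul_assoc, mul_one_sub]

theorem commute_prodOneSub_of_commute_ιG {x : F α} (h : ∀ f ∈ l, Commute x (ιG α f)) :
    Commute x (prodOneSub α l) :=
  Commute.list_prod_right _ _ <| by
    simp only [List.mem_map, forall_exists_index, and_imp]
    rintro _ f hf rfl
    exact (Commute.one_right x).sub_right (h f hf)

theorem commute_ιG_prodOneSub (he : IsIdempotentElem e) (hl : ∀ f ∈ l, IsIdempotentElem f) :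
    Commute (ιG α e) (prodOneSub α l) :=
  commute_prodOneSub_of_commute_ιG fun f hf => commute_ιG he (hl f hf)

theorem prodOneSub_append (l m : List G) :
    prodOneSub α (l ++ m) = prodOneSub α l * prodOneSub α m := by
  simp [prodOneSub]

theorem isIdempotentElem_prodOneSub (hl : ∀ f ∈ l, IsIdempotentElem f) :
    IsIdempotentElem (prodOneSub α l) := by
  induction l with
  | nil => exact IsIdempotentElem.one
  | cons f l ih =>
    rw [List.forall_mem_cons] at hl
    rw [prodOneSub_cons]
    exact IsIdempotentElem.mul_of_commute
      ((Commute.one_left _).sub_left (commute_ιG_prodOneSub hl.1 hl.2))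
      (isIdempotentElem_ιG hl.1).one_sub (ih hl.2)

theorem isSelfAdjoint_prodOneSub (hl : ∀ f ∈ l, IsIdempotentElem f) :
    IsSelfAdjoint (prodOneSub α l) := by
  induction l with
  | nil => exact IsSelfAdjoint.one _
  | cons f l ih =>
    rw [List.forall_mem_cons] at hl
    rw [prodOneSub_cons]
    exact (((IsSelfAdjoint.one _).sub (isSelfAdjoint_ιG hl.1)).commute_iff (ih hl.2)).mp
      ((Commute.one_left _).sub_left (commute_ιG_prodOneSub hl.1 hl.2))

theorem prodOneSub_mul_ιG (h : G) (hl : ∀ f ∈ l, IsIdempotentElem f) :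
    prodOneSub α l * ιG α h = ιG α h * prodOneSub α (l.map fun e => star h * e * h) := by
  induction l with
  | nil => simp [prodOneSub]
  | cons f l ih =>
    rw [List.forall_mem_cons] at hl
    rw [prodOneSub_cons, List.map_cons, prodOneSub_cons, mul_assoc, ih hl.2, ← mul_assoc,
      ← mul_assoc, sub_mul, one_mul, mul_sub, mul_one, ιG_mul_ιG_eq h hl.1]

theorem ιG_mem_EG (he : IsIdempotentElem e) : ιG α e ∈ EG α :=
  ⟨e, [], he, by simp, rfl⟩

theorem commute_ιG_of_mem_EG (he : IsIdempotentElem e) {x : F α} (hx : x ∈ EG α) :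
    Commute (ιG α e) x := by
  obtain ⟨e₀, l, he₀, hl, rfl⟩ := hx
  rw [elemP_eq]
  exact (commute_ιG he he₀).mul_right (commute_ιG_prodOneSub he hl)

theorem commute_of_mem_EG {x y : F α} (hx : x ∈ EG α) (hy : y ∈ EG α) : Commute x y := by
  obtain ⟨f₀, m, hf₀, hm, rfl⟩ := hy
  rw [elemP_eq]
  exact (commute_ιG_of_mem_EG hf₀ hx).symm.mul_right
    (commute_prodOneSub_of_commute_ιG fun f hf => (commute_ιG_of_mem_EG (hm f hf) hx).symm)

theorem isIdempotentElem_of_mem_EG {x : F α} (hx : x ∈ EG α) : IsIdempotentElem x := by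
  obtain ⟨e₀, l, he₀, hl, rfl⟩ := hx
  rw [elemP_eq]
  exact IsIdempotentElem.mul_of_commute (commute_ιG_prodOneSub he₀ hl)
    (isIdempotentElem_ιG he₀) (isIdempotentElem_prodOneSub hl)

theorem isSelfAdjoint_of_mem_EG {x : F α} (hx : x ∈ EG α) : IsSelfAdjoint x := by
  obtain ⟨e₀, l, he₀, hl, rfl⟩ := hx
  rw [elemP_eq]
  exact ((isSelfAdjoint_ιG he₀).commute_iff (isSelfAdjoint_prodOneSub hl)).mp
    (commute_ιG_prodOneSub he₀ hl)

theorem mul_mem_EG {x y : F α} (hx : x ∈ EG α) (hy : y ∈ EG α) : x * y ∈ EG α := by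
  obtain ⟨e₀, l, he₀, hl, rfl⟩ := hx
  obtain ⟨f₀, m, hf₀, hm, rfl⟩ := hy
  refine ⟨e₀ * f₀, l ++ m, InverseSemigroup.isIdempotentElem_mul he₀ hf₀,
    List.forall_mem_append.mpr ⟨hl, hm⟩, ?_⟩
  rw [elemP_eq, elemP_eq, elemP_eq, ιG_mul, prodOneSub_append, mul_assoc,
    ← mul_assoc _ (ιG α f₀), ← (commute_ιG_prodOneSub hf₀ hl).eq, mul_assoc, mul_assoc]

theorem exists_mem_EG_mul_ιG_eq {x : F α} (hx : x ∈ EG α) (h : G) :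
    ∃ y ∈ EG α, x * ιG α h = ιG α h * y := by
  obtain ⟨e₀, l, he₀, hl, rfl⟩ := hx
  refine ⟨elemP α (star h * e₀ * h) (l.map fun e => star h * e * h),
    ⟨_, _, InverseSemigroup.isIdempotentElem_star_mul_mul h he₀, ?_, rfl⟩, ?_⟩
  · exact List.forall_mem_map.mpr fun e he =>
      InverseSemigroup.isIdempotentElem_star_mul_mul h (hl e he)
  · rw [elemP_eq, elemP_eq, mul_assoc, prodOneSub_mul_ιG h hl, ← mul_assoc,
      ιG_mul_ιG_eq h he₀, mul_assoc]

theorem mem_GE_iff {k : F α} : k ∈ GE α ↔ ∃ g : G, ∃ x ∈ EG α, k = ιG α g * x := by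
  constructor
  · rintro ⟨g, e₀, l, he₀, hl, rfl⟩
    exact ⟨g, _, ⟨e₀, l, he₀, hl, rfl⟩, rfl⟩
  · rintro ⟨g, _, ⟨e₀, l, he₀, hl, rfl⟩, rfl⟩
    exact ⟨g, e₀, l, he₀, hl, rfl⟩

theorem mul_mem_GE {k k' : F α} (hk : k ∈ GE α) (hk' : k' ∈ GE α) : k * k' ∈ GE α := by
  obtain ⟨g, x, hx, rfl⟩ := mem_GE_iff.mp hk
  obtain ⟨h, y, hy, rfl⟩ := mem_GE_iff.mp hk'
  obtain ⟨x', hx', hxh⟩ := exists_mem_EG_mul_ιG_eq hx h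
  refine mem_GE_iff.mpr ⟨g * h, x' * y, mul_mem_EG hx' hy, ?_⟩
  rw [ιG_mul, mul_assoc, ← mul_assoc x, hxh, mul_assoc, mul_assoc]

theorem star_eq_mul_ιG_star {g : G} {x : F α} (hx : x ∈ EG α) :
    star (ιG α g * x) = x * ιG α (star g) := by
  rw [star_mul, (isSelfAdjoint_of_mem_EG hx).star_eq, ιG_star]

theorem star_mem_GE {k : F α} (hk : k ∈ GE α) : star k ∈ GE α := by
  obtain ⟨g, x, hx, rfl⟩ := mem_GE_iff.mp hk
  obtain ⟨x', hx', hxg⟩ := exists_mem_EG_mul_ιG_eq hx (star g)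
  exact mem_GE_iff.mpr ⟨star g, x', hx', by rw [star_eq_mul_ιG_star hx, hxg]⟩

theorem mul_star_mul_self_of_mem_GE {k : F α} (hk : k ∈ GE α) : k * star k * k = k := by
  obtain ⟨g, x, hx, rfl⟩ := mem_GE_iff.mp hk
  have hxx := isIdempotentElem_of_mem_EG hx
  have hc := commute_ιG_of_mem_EG (InverseSemigroup.isIdempotentElem_star_mul g) hx
  calc ιG α g * x * star (ιG α g * x) * (ιG α g * x)
      = ιG α g * (x * x) * ιG α (star g * g) * x := by
        rw [star_eq_mul_ιG_star hx, ιG_mul]; simp only [mul_assoc]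
    _ = ιG α g * (x * ιG α (star g * g)) * x := by rw [hxx.eq]; simp only [mul_assoc]
    _ = ιG α g * ιG α (star g * g) * (x * x) := by rw [← hc.eq]; simp only [mul_assoc]
    _ = ιG α g * x := by
        rw [hxx.eq, ← ιG_mul, ← mul_assoc g, InverseSemigroup.mul_star_mul_self]

theorem star_mul_self_mul_star_of_mem_GE {k : F α} (hk : k ∈ GE α) :
    star k * k * star k = star k := by
  simpa only [star_star] using mul_star_mul_self_of_mem_GE (star_mem_GE hk)

theorem mul_star_mem_EG {k : F α} (hk : k ∈ GE α) : k * star k ∈ EG α := by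
  obtain ⟨g, x, hx, rfl⟩ := mem_GE_iff.mp hk
  obtain ⟨x', hx', hxg⟩ := exists_mem_EG_mul_ιG_eq hx (star g)
  have hgg : ιG α (g * star g) ∈ EG α :=
    ιG_mem_EG (InverseSemigroup.isIdempotentElem_mul_star g)
  have heq : ιG α g * x * star (ιG α g * x) = ιG α (g * star g) * x' := by
    rw [star_eq_mul_ιG_star hx, mul_assoc, ← mul_assoc x, (isIdempotentElem_of_mem_EG hx).eq,
      hxg, ιG_mul, mul_assoc]
  rw [heq]
  exact mul_mem_EG hgg hx'

theorem mem_EG_of_mem_GE {p : F α} (hp : p ∈ GE α) (hpp : IsIdempotentElem p) :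
    p ∈ EG α := by
  have hc : Commute (p * star p) (star p * p) := by
    refine commute_of_mem_EG (mul_star_mem_EG hp) ?_
    simpa only [star_star] using mul_star_mem_EG (star_mem_GE hp)
  have hsa := isSelfAdjoint_of_isIdempotentElem_of_commute hpp (mul_star_mul_self_of_mem_GE hp) hc
  simpa only [hsa.star_eq, hpp.eq] using mul_star_mem_EG hp

theorem commute_of_mem_GE {p q : F α} (hp : p ∈ GE α) (hq : q ∈ GE α)
    (hpp : IsIdempotentElem p) (hqq : IsIdempotentElem q) : Commute p q :=
  commute_of_mem_EG (mem_EG_of_mem_GE hp hpp) (mem_EG_of_mem_GE hq hqq)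

end Projections

theorem GE_is_inverse_semigroup_general
    {G : Type*} [InverseSemigroup G]
    {A : Type*} [NonUnitalNormedRing A] [StarRing A] [NormedSpace ℂ A]
    (α : G → A →⋆ₙₐ[ℂ] A) :
    (∀ x ∈ GE α, ∀ y ∈ GE α, x * y ∈ GE α) ∧
    (∀ x ∈ GE α, star x ∈ GE α) ∧
    (∀ k ∈ GE α, k * star k * k = k ∧ star k * k * star k = star k) ∧
    (∀ p ∈ GE α, ∀ q ∈ GE α, p * p = p → q * q = q → p * q = q * p) ∧
    (∀ k ∈ GE α, ∀ m ∈ GE α, k * m * k = k → m * k * m = m → m = star k) := by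
  refine ⟨fun _ hx _ hy => mul_mem_GE hx hy, fun _ hx => star_mem_GE hx,
    fun k hk => ⟨mul_star_mul_self_of_mem_GE hk, star_mul_self_mul_star_of_mem_GE hk⟩,
    fun p hp q hq hpp hqq => (commute_of_mem_GE hp hq hpp hqq).eq,
    fun k hk m hm hkm hmk => ?_⟩
  have hk' := star_mem_GE hk
  refine eq_of_mul_mul_eq_of_commute hkm hmk (mul_star_mul_self_of_mem_GE hk)
    (star_mul_self_mul_star_of_mem_GE hk) ?_ ?_
  · exact commute_of_mem_GE (mul_mem_GE hm hk) (mul_mem_GE hk' hk)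
      (isIdempotentElem_mul_of_mul_mul_eq hkm)
      (isIdempotentElem_mul_of_mul_mul_eq (mul_star_mul_self_of_mem_GE hk))
  · exact commute_of_mem_GE (mul_mem_GE hk hm) (mul_mem_GE hk hk')
      (isIdempotentElem_mul_of_mul_mul_eq hmk)
      (isIdempotentElem_mul_of_mul_mul_eq (star_mul_self_mul_star_of_mem_GE hk))

/-- Let `G` be an inverse semigroup and `A` a `G`-algebra.  The set
`G_E` is closed under the multiplication and the involution of `𝔽(G,A)`, and it is an
inverse semigroup: every `k ∈ G_E` satisfies `k k* k = k` and `k* k k* = k*`, any two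
idempotent elements of `G_E` commute, and each `k ∈ G_E` has `k*` as its unique
generalized inverse. -/
theorem GE_is_inverse_semigroup
    {G : Type*} [InverseSemigroup G]
    {A : Type*} [NonUnitalNormedRing A] [StarRing A] [CStarRing A] [NormedSpace ℂ A]
    [IsScalarTower ℂ A A] [SMulCommClass ℂ A A] [StarModule ℂ A] [CompleteSpace A]
    (α : G → A →⋆ₙₐ[ℂ] A) (hα : IsGAlgebra α) :
    (∀ x ∈ GE α, ∀ y ∈ GE α, x * y ∈ GE α) ∧
    (∀ x ∈ GE α, star x ∈ GE α) ∧
    (∀ k ∈ GE α, k * star k * k = k ∧ star k * k * star k = star k) ∧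
    (∀ p ∈ GE α, ∀ q ∈ GE α, p * p = p → q * q = q → p * q = q * p) ∧
    (∀ k ∈ GE α, ∀ m ∈ GE α, k * m * k = k → m * k * m = m → m = star k) :=
  GE_is_inverse_semigroup_general α

end Green
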